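/- Let v_1, …, v_d be LDP fan data with d ≥ 4, and suppose that for some index i one has det(v_{i−1}, v_i) ≥ 2, det(v_i, v_{i+1}) = 1, and det(v_{i+1}, v_{i+2}) ≥ 2 (i.e., the cones σ_{i−1} and σ_{i+1} are singular while σ_i is nonsingular). Then there exists an index j with j not congruent to i−1, i, or i+1 modulo d such that det(v_j, v_{j+1}) ≥ 2. In particular, the data has at least three singular cones (equivalently, X(Δ) has at least three singular points). -/

import Mathlib

/-- The determinant `det(u, w) = u₁w₂ − u₂w₁` of two integer vectors. -/
def detZ (u w : ℤ × ℤ) : ℤ := u.1 * w.2 - u.2 * w.1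

/-- The real vector associated to an integer vector. -/
noncomputable def toR2 (u : ℤ × ℤ) : ℝ × ℝ := ((u.1 : ℝ), (u.2 : ℝ))

/-- The cone `ℝ_{≥0} u + ℝ_{≥0} w` spanned by two integer vectors. -/
def coneOf (u w : ℤ × ℤ) : Set (ℝ × ℝ) :=
  {x | ∃ a b : ℝ, 0 ≤ a ∧ 0 ≤ b ∧ x = a • toR2 u + b • toR2 w}

/-- Complete fan data of length `d`: a cyclic sequence of primitive integer vectors with
`det(v_i, v_{i+1}) ≥ 1` whose successive cones cover `ℝ²` and have pairwise disjoint
interiors. -/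
def IsCompleteFanData (d : ℕ) (v : ZMod d → ℤ × ℤ) : Prop :=
  3 ≤ d ∧
  (∀ i, Int.gcd (v i).1 (v i).2 = 1) ∧
  (∀ i, 1 ≤ detZ (v i) (v (i + 1))) ∧
  (⋃ i, coneOf (v i) (v (i + 1))) = Set.univ ∧
  ∀ i j, i ≠ j →
    interior (coneOf (v i) (v (i + 1))) ∩ interior (coneOf (v j) (v (j + 1))) = ∅

/-- `f(i) = det(v_{i−1}, v_i) + det(v_i, v_{i+1}) + det(v_{i+1}, v_{i−1})`. -/
def fanF (d : ℕ) (v : ZMod d → ℤ × ℤ) (i : ZMod d) : ℤ :=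
  detZ (v (i - 1)) (v i) + detZ (v i) (v (i + 1)) + detZ (v (i + 1)) (v (i - 1))

/-- LDP fan data: complete fan data with `f(i) ≥ 1` for all `i`. -/
def IsLDPFanData (d : ℕ) (v : ZMod d → ℤ × ℤ) : Prop :=
  IsCompleteFanData d v ∧ ∀ i, 1 ≤ fanF d v i

/-- The number of singular cones, i.e. indices `i` with `det(v_i, v_{i+1}) ≥ 2`. -/
noncomputable def numSingular (d : ℕ) (v : ZMod d → ℤ × ℤ) : ℕ :=
  {i : ZMod d | 2 ≤ detZ (v i) (v (i + 1))}.ncard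

/-- Equivalence of fan data: some `GL(2, ℤ)` matrix maps the vector set of one
bijectively onto the vector set of the other. -/
def FanEquiv {d₁ d₂ : ℕ} (v : ZMod d₁ → ℤ × ℤ) (w : ZMod d₂ → ℤ × ℤ) : Prop :=
  ∃ M : Matrix (Fin 2) (Fin 2) ℤ, IsUnit M.det ∧
    (fun u : ℤ × ℤ => (M 0 0 * u.1 + M 0 1 * u.2, M 1 0 * u.1 + M 1 1 * u.2)) ''
      Set.range v = Set.range w

/-- The cyclic sequence of length `d − 1` obtained by deleting the vector `v_k`:
it lists `v_{k+1}, v_{k+2}, …, v_{k+d−1}`. -/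
def deleteAt {d : ℕ} (v : ZMod d → ℤ × ℤ) (k : ZMod d) : ZMod (d - 1) → ℤ × ℤ :=
  fun i => v (k + 1 + (i.val : ZMod d))

/-- The cyclic sequence of length `d + 1` obtained by inserting `v_k + v_{k+1}`
between `v_k` and `v_{k+1}`. -/
def insertAt {d : ℕ} (v : ZMod d → ℤ × ℤ) (k : ZMod d) : ZMod (d + 1) → ℤ × ℤ :=
  fun i =>
    if i.val ≤ k.val then v ((i.val : ℕ) : ZMod d)
    else if i.val = k.val + 1 then v k + v (k + 1)
    else v ((i.val - 1 : ℕ) : ZMod d)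

/-!
Suppose every cone other than `σ_{i-1}, σ_i, σ_{i+1}` is nonsingular. In the unimodular basis
`e₀ = v_i, e₁ = v_{i+1}` write `w = v_{i+2} = (-q, b)` and `v_{i-1} = (a, -p)` with `p, q ≥ 2`;
the LDP conditions at `e₀, e₁` and primitivity of `w` give `a ≤ p` and `b ≤ q - 1`.
The rays `w = u₀, u₁, …, v_{i-1}` form a smooth chain, and LDP at `u₁` reads
`u₀ + u₂ = a₁ u₁` with `a₁ ≤ 1`. If `a₁ = 1`, deleting `u₁` (a blow-down) gives a shorter
chain with the same properties. If `a₁ ≤ 0`, then `det(w, u₂) ≤ 0`, and since `w` lies in no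
other cone, `det(w, ·)` stays `≤ 0` along the chain up to `e₀`: so `b ≥ 0` and
`det(w, v_{i-1}) = pq - ab ≤ 0`, contradicting `ab ≤ p(q - 1)`. When `d = 4` the chain is just
`w, v_{i-1}` and `det(w, v_{i-1}) = pq - ab = 1` is ruled out directly.
-/

/-- Twice the signed area of the triangle `a b c`; `fanF d v i` is this for three consecutive
rays. -/
def triangleDet (a b c : ℤ × ℤ) : ℤ := detZ a b + detZ b c + detZ c a

lemma detZ_anticomm (u w : ℤ × ℤ) : detZ u w = -detZ w u := by
  simp only [detZ]; ring

lemma detZ_self (u : ℤ × ℤ) : detZ u u = 0 := by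
  simp only [detZ]; ring

lemma detZ_smul_add_left (N : ℤ) (u w x : ℤ × ℤ) :
    detZ (N • u + w) x = N * detZ u x + detZ w x := by
  simp only [detZ, Prod.fst_add, Prod.snd_add, Prod.smul_fst, Prod.smul_snd, smul_eq_mul]; ring

lemma detZ_smul_add_right (N : ℤ) (x u w : ℤ × ℤ) :
    detZ x (N • u + w) = N * detZ x u + detZ x w := by
  simp only [detZ, Prod.fst_add, Prod.snd_add, Prod.smul_fst, Prod.smul_snd, smul_eq_mul]; ring

lemma triangleDet_add_right (r s t : ℤ × ℤ) :
    triangleDet r s (s + t) = triangleDet r s t - detZ r s := by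
  simp only [triangleDet, detZ, Prod.fst_add, Prod.snd_add]; ring

lemma triangleDet_add_left (s t x : ℤ × ℤ) :
    triangleDet (s + t) t x = triangleDet s t x - detZ t x := by
  simp only [triangleDet, detZ, Prod.fst_add, Prod.snd_add]; ring

lemma eq_add_of_detZ_eq_one {s w t : ℤ × ℤ} (hsw : detZ s w = 1) (hwt : detZ w t = 1)
    (hst : detZ s t = 1) : w = s + t := by
  simp only [detZ] at hsw hwt hst
  ext <;> simp only [Prod.fst_add, Prod.snd_add]
  · linear_combination (-w.1) * hst + t.1 * hsw + s.1 * hwt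
  · linear_combination (-w.2) * hst + t.2 * hsw + s.2 * hwt

lemma detZ_expand_of_detZ_eq_one {e₀ e₁ : ℤ × ℤ} (h : detZ e₀ e₁ = 1) (z z' : ℤ × ℤ) :
    detZ z z' = detZ z e₁ * detZ e₀ z' - detZ e₀ z * detZ z' e₁ := by
  simp only [detZ] at h ⊢
  linear_combination (-(z.1 * z'.2 - z.2 * z'.1)) * h

lemma detZ_ne_detZ_of_gcd_eq_one {e₀ e₁ w : ℤ × ℤ} (h : detZ e₀ e₁ = 1)
    (hw : Int.gcd w.1 w.2 = 1) (hq : 2 ≤ detZ e₁ w) : detZ e₀ w ≠ detZ e₁ w := by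
  intro heq
  set q := detZ e₁ w
  have hdvd : q ∣ (Int.gcd w.1 w.2 : ℤ) := by
    simp only [detZ, q] at h heq ⊢
    refine Int.dvd_coe_gcd ⟨e₁.1 - e₀.1, ?_⟩ ⟨e₁.2 - e₀.2, ?_⟩
    · linear_combination (-w.1) * h + e₁.1 * heq
    · linear_combination (-w.2) * h + e₁.2 * heq
  rw [hw] at hdvd
  have := Int.le_of_dvd one_pos hdvd
  omega

lemma mul_sub_mul_ne_one {a b p q : ℤ} (hp : 2 ≤ p) (hq : 2 ≤ q) (ha : a ≤ p) (hb : b ≤ q - 1)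
    (ha' : -q ≤ a) (hb' : -p ≤ b) : p * q - a * b ≠ 1 := by
  intro h
  rcases le_or_gt 0 b with hb₀ | hb₀
  · linarith [mul_le_mul ha hb hb₀ (by omega : (0 : ℤ) ≤ p)]
  rcases le_or_gt 0 a with ha₀ | ha₀
  · nlinarith
  rcases eq_or_lt_of_le ha' with rfl | ha'
  · have : q * (p + b) = 1 := by linarith
    rcases le_or_gt (p + b) 0 with hpb | hpb <;> nlinarith
  · nlinarith

lemma natCast_ne_zero_of_lt {d k : ℕ} (h0 : 0 < k) (hk : k < d) : (k : ZMod d) ≠ 0 := by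
  rw [Ne, ZMod.natCast_eq_zero_iff]
  exact fun hdvd => absurd (Nat.le_of_dvd h0 hdvd) (by omega)

lemma toR2_mem_interior_coneOf {a b z : ℤ × ℤ} (hab : 0 < detZ a b) (haz : 0 < detZ a z)
    (hzb : 0 < detZ z b) : toR2 z ∈ interior (coneOf a b) := by
  let U : Set (ℝ × ℝ) := {x | 0 < (a.1 : ℝ) * x.2 - a.2 * x.1 ∧ 0 < x.1 * b.2 - x.2 * b.1}
  have hU : IsOpen U :=
    (isOpen_lt continuous_const
      (by fun_prop : Continuous fun x : ℝ × ℝ => (a.1 : ℝ) * x.2 - a.2 * x.1)).inter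
    (isOpen_lt continuous_const
      (by fun_prop : Continuous fun x : ℝ × ℝ => x.1 * b.2 - x.2 * b.1))
  refine interior_maximal (fun x hx => ?_) hU ?_
  · have hD : (0 : ℝ) < detZ a b := by exact_mod_cast hab
    refine ⟨(x.1 * b.2 - x.2 * b.1) / detZ a b, (a.1 * x.2 - a.2 * x.1) / detZ a b,
      div_nonneg hx.2.le hD.le, div_nonneg hx.1.le hD.le, ?_⟩
    simp only [detZ, toR2, Prod.ext_iff, Prod.fst_add, Prod.snd_add, Prod.smul_mk,
      smul_eq_mul] at hD ⊢
    push_cast at hD ⊢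
    constructor <;>
    · rw [div_mul_eq_mul_div, div_mul_eq_mul_div, ← add_div, eq_div_iff hD.ne']
      ring
  · simp only [detZ] at haz hzb
    exact ⟨by simp only [toR2]; exact_mod_cast haz, by simp only [toR2]; exact_mod_cast hzb⟩

lemma IsCompleteFanData.ray_not_mem_cone {d : ℕ} {v : ZMod d → ℤ × ℤ}
    (h : IsCompleteFanData d v) {j l : ZMod d} (hjl : j ≠ l) :
    ¬(0 ≤ detZ (v j) (v l) ∧ 0 < detZ (v l) (v (j + 1))) := by
  rintro ⟨hA, hB⟩
  obtain ⟨-, -, hcone, -, hdisj⟩ := h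
  have hl := hcone l
  -- `z` lies in the open cone `σ_l`, and for `N` large also in the open cone `σ_j`;
  -- the Plücker relation handles the boundary case `det(v_j, v_l) = 0`.
  set E := detZ (v (l + 1)) (v (j + 1))
  set N := |E| + 1
  set z := N • v l + v (l + 1)
  have plucker : detZ (v j) (v (l + 1)) * detZ (v l) (v (j + 1)) =
      detZ (v j) (v l) * E + detZ (v j) (v (j + 1)) * detZ (v l) (v (l + 1)) := by
    simp only [E, detZ]; ring
  have hNE : 0 < N * detZ (v l) (v (j + 1)) + E := by nlinarith [neg_abs_le E, abs_nonneg E]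
  have hzj : 0 < detZ z (v (j + 1)) := by rwa [detZ_smul_add_left]
  have hjz : 0 < detZ (v j) z := by
    rw [detZ_smul_add_right]
    refine pos_of_mul_pos_left (b := detZ (v l) (v (j + 1))) ?_ hB.le
    nlinarith [hcone j, mul_nonneg hA hNE.le]
  have hlz : 0 < detZ (v l) z := by
    rw [detZ_smul_add_right, detZ_self]; linarith
  have hzl : 0 < detZ z (v (l + 1)) := by
    rw [detZ_smul_add_left, detZ_self]; positivity
  exact (Set.eq_empty_iff_forall_notMem.mp (hdisj j l hjl)) _
    ⟨toR2_mem_interior_coneOf (hcone j) hjz hzj, toR2_mem_interior_coneOf hl hlz hzl⟩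

/-- The combinatorial shadow of LDP fan data with rays `e₀, e₁, w, c 0, …, c n` in cyclic
order whose only singular cones are `(e₁, w)` and `(c n, e₀)`. Of completeness only
`not_mem_cone` is kept: `w` lies in no half-open cone `[c j, c (j + 1))`. -/
structure TwoSingularChain (e₀ e₁ w : ℤ × ℤ) (c : ℕ → ℤ × ℤ) (n : ℕ) : Prop where
  detZ_e₀_e₁ : detZ e₀ e₁ = 1
  two_le_detZ_e₁_w : 2 ≤ detZ e₁ w
  gcd_w : Int.gcd w.1 w.2 = 1
  detZ_w_c : detZ w (c 0) = 1
  detZ_c : ∀ k < n, detZ (c k) (c (k + 1)) = 1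
  two_le_detZ_c_e₀ : 2 ≤ detZ (c n) e₀
  c_succ : c (n + 1) = e₀
  triangleDet_e₁ : 1 ≤ triangleDet e₀ e₁ w
  triangleDet_w : 1 ≤ triangleDet e₁ w (c 0)
  triangleDet_c_zero : 1 ≤ triangleDet w (c 0) (c 1)
  triangleDet_c : ∀ k < n, 1 ≤ triangleDet (c k) (c (k + 1)) (c (k + 2))
  triangleDet_e₀ : 1 ≤ triangleDet (c n) e₀ e₁
  not_mem_cone : ∀ j ≤ n, ¬(0 ≤ detZ (c j) w ∧ 0 < detZ w (c (j + 1)))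

namespace TwoSingularChain

variable {e₀ e₁ w : ℤ × ℤ} {c : ℕ → ℤ × ℤ} {n : ℕ}

lemma detZ_e₀_w_le (h : TwoSingularChain e₀ e₁ w c n) : detZ e₀ w ≤ detZ e₁ w - 1 := by
  have := h.triangleDet_e₁
  have := detZ_ne_detZ_of_gcd_eq_one h.detZ_e₀_e₁ h.gcd_w h.two_le_detZ_e₁_w
  simp only [triangleDet, h.detZ_e₀_e₁, detZ_anticomm w e₀] at *
  omega

lemma detZ_c_e₁_le (h : TwoSingularChain e₀ e₁ w c n) : detZ (c n) e₁ ≤ detZ (c n) e₀ := by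
  have := h.triangleDet_e₀
  simp only [triangleDet, h.detZ_e₀_e₁, detZ_anticomm e₁ (c n)] at this
  omega

lemma detZ_w_c_one_le (h : TwoSingularChain e₀ e₁ w c (n + 1)) : detZ w (c 1) ≤ 1 := by
  have := h.triangleDet_c_zero
  simp only [triangleDet, h.detZ_w_c, h.detZ_c 0 (by omega), detZ_anticomm (c 1) w] at this
  omega

lemma contract (h : TwoSingularChain e₀ e₁ w c (n + 1)) (hw : detZ w (c 1) = 1) :
    TwoSingularChain e₀ e₁ w (fun k => c (k + 1)) n := by
  have hc₀ : c 0 = w + c 1 := eq_add_of_detZ_eq_one h.detZ_w_c (h.detZ_c 0 (by omega)) hw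
  have h₁₂ : 1 ≤ detZ (c 1) (c 2) := by
    rcases n with _ | n
    · have := h.two_le_detZ_c_e₀
      rw [← h.c_succ] at this
      exact le_trans (by norm_num) this
    · rw [h.detZ_c 1 (by omega)]
  refine
    { h with
      detZ_w_c := hw
      detZ_c := fun k hk => h.detZ_c (k + 1) (by omega)
      triangleDet_w := ?_
      triangleDet_c_zero := ?_
      triangleDet_c := fun k hk => h.triangleDet_c (k + 1) (by omega)
      not_mem_cone := fun j hj => h.not_mem_cone (j + 1) (by omega) }
  · have := h.triangleDet_w
    rw [hc₀, triangleDet_add_right] at this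
    linarith [h.two_le_detZ_e₁_w]
  · have := h.triangleDet_c 0 (by omega)
    rw [zero_add, hc₀, triangleDet_add_left] at this
    exact this.trans (by linarith)

lemma false_of_zero (h : TwoSingularChain e₀ e₁ w c 0) : False := by
  have hdet := detZ_expand_of_detZ_eq_one h.detZ_e₀_e₁ w (c 0)
  rw [h.detZ_w_c, detZ_anticomm w e₁, detZ_anticomm e₀ (c 0)] at hdet
  have hw := h.triangleDet_w
  have hc := h.triangleDet_c_zero
  rw [show c 1 = e₀ from h.c_succ] at hc
  simp only [triangleDet, h.detZ_w_c] at hw hc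
  refine mul_sub_mul_ne_one h.two_le_detZ_c_e₀ h.two_le_detZ_e₁_w h.detZ_c_e₁_le h.detZ_e₀_w_le
    (by linarith) (by linarith) ?_
  linear_combination -hdet

lemma detZ_w_c_nonpos (h : TwoSingularChain e₀ e₁ w c n) (h₁ : detZ w (c 1) ≤ 0) :
    ∀ j, 1 ≤ j → j ≤ n + 1 → detZ w (c j) ≤ 0 := by
  intro j hj
  induction j, hj using Nat.le_induction with
  | base => exact fun _ => h₁
  | succ j hj ih =>
    intro hjn
    have hcone := h.not_mem_cone j (by omega)
    rw [detZ_anticomm] at hcone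
    have := ih (by omega)
    by_contra hpos
    exact hcone ⟨by linarith, by linarith⟩

lemma false_of_detZ_nonpos (h : TwoSingularChain e₀ e₁ w c (n + 1)) (h₁ : detZ w (c 1) ≤ 0) :
    False := by
  have hb : detZ w e₀ ≤ 0 := h.c_succ ▸ h.detZ_w_c_nonpos h₁ (n + 2) (by omega) le_rfl
  have hlast := h.detZ_w_c_nonpos h₁ (n + 1) (by omega) (by omega)
  have hdet := detZ_expand_of_detZ_eq_one h.detZ_e₀_e₁ w (c (n + 1))
  rw [detZ_anticomm w e₁, detZ_anticomm e₀ (c (n + 1))] at hdet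
  have hp := h.two_le_detZ_c_e₀
  have := mul_le_mul h.detZ_c_e₁_le h.detZ_e₀_w_le (by rw [detZ_anticomm] at hb; omega)
    (by omega : 0 ≤ detZ (c (n + 1)) e₀)
  nlinarith

end TwoSingularChain

theorem not_twoSingularChain (e₀ e₁ w : ℤ × ℤ) (n : ℕ) :
    ∀ c, ¬TwoSingularChain e₀ e₁ w c n := by
  induction n with
  | zero => exact fun c h => h.false_of_zero
  | succ n ih =>
    intro c h
    rcases h.detZ_w_c_one_le.lt_or_eq with hlt | heq
    · exact h.false_of_detZ_nonpos (by omega)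
    · exact ih _ (h.contract heq)

lemma IsLDPFanData.twoSingularChain {d : ℕ} {v : ZMod d → ℤ × ℤ} (h : IsLDPFanData d v)
    (hd : 4 ≤ d) {i : ZMod d} (h1 : 2 ≤ detZ (v (i - 1)) (v i))
    (h2 : detZ (v i) (v (i + 1)) = 1) (h3 : 2 ≤ detZ (v (i + 1)) (v (i + 2)))
    (hno : ∀ j, j ≠ i - 1 → j ≠ i → j ≠ i + 1 → detZ (v j) (v (j + 1)) < 2) :
    TwoSingularChain (v i) (v (i + 1)) (v (i + 2)) (fun k => v (i + 3 + k)) (d - 4) := by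
  have hwrap : ((d - 4 : ℕ) : ZMod d) = -4 := by
    rw [Nat.cast_sub hd, ZMod.natCast_self, zero_sub]; norm_num
  have htri : ∀ a b c : ZMod d, b = a + 1 → c = b + 1 → 1 ≤ triangleDet (v a) (v b) (v c) := by
    rintro a _ _ rfl rfl
    simpa [fanF, triangleDet] using h.2 (a + 1)
  have hsmooth : ∀ k : ℕ, k ≤ d - 4 → ∀ a b : ZMod d, a = i + 2 + k → b = a + 1 →
      detZ (v a) (v b) = 1 := by
    rintro k hk a _ rfl rfl
    have hne : ∀ m : ℕ, m ≤ 2 → ∀ j, j = i + 1 - m → i + 2 + k ≠ j := by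
      rintro m hm _ rfl heq
      exact natCast_ne_zero_of_lt (d := d) (k := k + 1 + m) (by omega) (by omega)
        (by push_cast; linear_combination heq)
    have := hno _ (hne 2 le_rfl _ (by push_cast; ring)) (hne 1 (by omega) _ (by push_cast; ring))
      (hne 0 (by omega) _ (by simp))
    linarith [h.1.2.2.1 (i + 2 + k)]
  refine
    { detZ_e₀_e₁ := h2
      two_le_detZ_e₁_w := h3
      gcd_w := h.1.2.1 _
      detZ_w_c := hsmooth 0 (by omega) _ _ (by simp) (by ring)
      detZ_c := fun k hk => hsmooth (k + 1) (by omega) _ _ (by push_cast; ring) (by push_cast; ring)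
      two_le_detZ_c_e₀ := by convert h1 using 3; rw [hwrap]; ring
      c_succ := by push_cast [hwrap]; ring_nf
      triangleDet_e₁ := htri _ _ _ (by ring) (by ring)
      triangleDet_w := htri _ _ _ (by ring) (by push_cast; ring)
      triangleDet_c_zero := htri _ _ _ (by push_cast; ring) (by push_cast; ring)
      triangleDet_c := fun k hk => htri _ _ _ (by push_cast; ring) (by push_cast; ring)
      triangleDet_e₀ := htri _ _ _ (by rw [hwrap]; ring) (by ring)
      not_mem_cone := fun j hj => ?_ }
  have hray := h.1.ray_not_mem_cone (j := i + 3 + j) (l := i + 2) fun heq =>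
    natCast_ne_zero_of_lt (d := d) (k := j + 1) (by omega) (by omega)
      (by push_cast; linear_combination heq)
  convert hray using 5
  push_cast; ring

/-- Lemma 3.1 (2): if in LDP fan data the cones `σ_{i−1}` and `σ_{i+1}` are singular
while `σ_i` is nonsingular, then some further cone `σ_j` with `j ∉ {i−1, i, i+1}`
is singular; in particular there are at least three singular cones. -/
theorem singular_nonsingular_singular_third (d : ℕ) (v : ZMod d → ℤ × ℤ)
    (hd : 4 ≤ d) (h : IsLDPFanData d v) (i : ZMod d)
    (h1 : 2 ≤ detZ (v (i - 1)) (v i))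
    (h2 : detZ (v i) (v (i + 1)) = 1)
    (h3 : 2 ≤ detZ (v (i + 1)) (v (i + 2))) :
    (∃ j : ZMod d, j ≠ i - 1 ∧ j ≠ i ∧ j ≠ i + 1 ∧ 2 ≤ detZ (v j) (v (j + 1))) ∧
    3 ≤ numSingular d v := by
  have hthird : ∃ j : ZMod d, j ≠ i - 1 ∧ j ≠ i ∧ j ≠ i + 1 ∧ 2 ≤ detZ (v j) (v (j + 1)) := by
    by_contra hno
    push Not at hno
    exact not_twoSingularChain _ _ _ _ _ (h.twoSingularChain hd h1 h2 h3 hno)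
  refine ⟨hthird, ?_⟩
  obtain ⟨j, hj₁, -, hj₃, hj⟩ := hthird
  have : NeZero d := ⟨by omega⟩
  have hne : i - 1 ≠ i + 1 := fun heq =>
    natCast_ne_zero_of_lt (d := d) (k := 2) (by omega) (by omega)
      (by push_cast; linear_combination -heq)
  refine (Set.two_lt_ncard_iff).2 ⟨i - 1, i + 1, j, ?_, ?_, hj, hne, hj₁.symm, hj₃.symm⟩
  · simpa using h1
  · simpa [add_assoc, one_add_one_eq_two] using h3
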